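/- Let B ∈ SL(N,ℤ) be a hyperbolic toral automorphism (no eigenvalue of modulus 1). Suppose x* ∈ ℝ^N is a point whose orbit under the ℤ^N ⋊_B ℤ action ((b,n), x) ↦ Bⁿx + b is dense in ℝ^N. Then the set of fixed points of nontrivial group elements, i.e. the set {(I - Bⁿ)⁻¹ b : b ∈ ℤ^N, n ∈ ℤ, n ≠ 0}, has x* in its closure. -/

import Mathlib

/-!
A rational point `r = p / d` is a fixed point of a nontrivial group element: since `det B = 1`,
`B` is invertible modulo `d`, so some power `Bᵏ` with `k > 0` is `≡ I (mod d)`, i.e.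
`Bᵏ = I + d C` with `C` integral, and then `Bᵏ r - C p = r`. Hyperbolicity makes `I - Bᵏ`
invertible, so `r = (I - Bᵏ)⁻¹ (-C p)`. Rational points being dense, every point of `ℝ^N`
is a limit of fixed points.
-/

open Matrix

/-- Integer power of a matrix, using the nonsingular inverse for negative exponents. -/
noncomputable def mzpow {N : ℕ} (A : Matrix (Fin N) (Fin N) ℝ) : ℤ → Matrix (Fin N) (Fin N) ℝ
  | (Int.ofNat n) => A ^ n
  | (Int.negSucc n) => A⁻¹ ^ (n + 1)

theorem isUnit_one_sub_pow_of_norm_ne_one {A : Type*} [Ring A] [Algebra ℂ A] {a : A}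
    (ha : ∀ μ ∈ spectrum ℂ a, ‖μ‖ ≠ 1) {n : ℕ} (hn : 0 < n) : IsUnit (1 - a ^ n) := by
  by_contra h
  have h1 : (1 : ℂ) ∈ spectrum ℂ (a ^ n) := spectrum.mem_iff.2 (by rwa [map_one])
  rw [spectrum.map_pow_of_pos a hn] at h1
  obtain ⟨μ, hμ, hμn⟩ := h1
  exact ha μ hμ (Complex.norm_eq_one_of_pow_eq_one hμn hn.ne')

namespace Matrix

variable {ι : Type*} [Fintype ι] [DecidableEq ι]

theorem isUnit_of_isUnit_map_ofReal {M : Matrix ι ι ℝ}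
    (h : IsUnit (M.map Complex.ofRealHom)) : IsUnit M := by
  rw [isUnit_iff_isUnit_det] at h ⊢
  rwa [← RingHom.mapMatrix_apply, ← RingHom.map_det, isUnit_map_iff] at h

theorem isUnit_one_sub_pow_map_intCast {B : Matrix ι ι ℤ}
    (hB : ∀ μ ∈ spectrum ℂ (B.map (fun k => (k : ℂ))), ‖μ‖ ≠ 1) {n : ℕ} (hn : 0 < n) :
    IsUnit (1 - B.map (fun k => (k : ℝ)) ^ n) := by
  refine isUnit_of_isUnit_map_ofReal ?_
  have hmap : (B.map (fun k => (k : ℝ))).map Complex.ofRealHom = B.map (fun k => (k : ℂ)) := by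
    ext; simp
  rw [← RingHom.mapMatrix_apply, map_sub, map_one, map_pow, RingHom.mapMatrix_apply, hmap]
  exact isUnit_one_sub_pow_of_norm_ne_one hB hn

theorem exists_pow_eq_one_add_smul {B : Matrix ι ι ℤ} (hB : IsUnit B.det) (d : ℕ) [NeZero d] :
    ∃ k, 0 < k ∧ ∃ C : Matrix ι ι ℤ, B ^ k = 1 + (d : ℤ) • C := by
  obtain ⟨u, hu⟩ : IsUnit ((Int.castRingHom (ZMod d)).mapMatrix B) := by
    rw [isUnit_iff_isUnit_det, ← RingHom.map_det]
    exact hB.map _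
  have hk : (Int.castRingHom (ZMod d)).mapMatrix (B ^ orderOf u - 1) = 0 := by
    rw [map_sub, map_pow, ← hu, ← Units.val_pow_eq_pow_val, pow_orderOf_eq_one, Units.val_one,
      map_one, sub_self]
  refine ⟨orderOf u, orderOf_pos u, (B ^ orderOf u - 1).map (· / (d : ℤ)), ?_⟩
  ext i j
  have hdvd : (d : ℤ) ∣ (B ^ orderOf u - 1) i j :=
    (ZMod.intCast_zmod_eq_zero_iff_dvd _ _).1 (congrFun (congrFun hk i) j)
  rw [add_apply, smul_apply, map_apply, smul_eq_mul, Int.mul_ediv_cancel' hdvd, sub_apply,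
    add_sub_cancel]

theorem one_sub_map_intCast_mulVec_div {P C : Matrix ι ι ℤ} {d : ℕ} [NeZero d]
    (h : P = 1 + (d : ℤ) • C) (p : ι → ℤ) :
    (1 - P.map (fun k => (k : ℝ))) *ᵥ (fun i => (p i : ℝ) / d) =
      fun i => ((-(C *ᵥ p)) i : ℝ) := by
  have hP : 1 - P.map (fun k => (k : ℝ)) = -((d : ℝ) • C.map (fun k => (k : ℝ))) := by
    ext i j
    rw [h, sub_apply, map_apply, add_apply, smul_apply, smul_eq_mul]
    by_cases hij : i = j <;> simp [one_apply, hij]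
  have hr : (fun i => (p i : ℝ) / d) = (d : ℝ)⁻¹ • fun i => (p i : ℝ) := by
    ext i; simp [div_eq_inv_mul]
  have hCp : C.map (fun k => (k : ℝ)) *ᵥ (fun i => (p i : ℝ)) = fun i => ((C *ᵥ p) i : ℝ) := by
    ext i; simp [mulVec, dotProduct]
  rw [hP, hr, neg_mulVec, smul_mulVec, mulVec_smul, smul_smul, mul_inv_cancel₀ (NeZero.ne _),
    one_smul, hCp]
  ext i; simp

end Matrix

theorem dist_div_round_mul_le {ι : Type*} [Fintype ι] (x : ι → ℝ) {d : ℝ} (hd : 0 < d) :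
    dist x (fun i => round (d * x i) / d) ≤ 1 / d := by
  refine (dist_pi_le_iff (by positivity)).2 fun i => ?_
  rw [Real.dist_eq, sub_div' hd.ne', abs_div, abs_of_pos hd, mul_comm]
  gcongr
  linarith [abs_sub_round (d * x i)]

theorem fixed_points_accumulate_general {N : ℕ} (B : Matrix (Fin N) (Fin N) ℤ)
    (hdet : B.det = 1)
    (hhyp : ∀ μ ∈ spectrum ℂ (B.map (fun k => (k : ℂ))), ‖μ‖ ≠ 1)
    (x : Fin N → ℝ) :
    x ∈ closure {z : Fin N → ℝ | ∃ (b : Fin N → ℤ) (n : ℤ), n ≠ 0 ∧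
      z = ((1 - mzpow (B.map (fun k => (k : ℝ))) n)⁻¹).mulVec (fun i => (b i : ℝ))} := by
  rw [Metric.mem_closure_iff]
  intro ε hε
  obtain ⟨m, hm⟩ := exists_nat_one_div_lt hε
  obtain ⟨k, hk, C, hC⟩ := exists_pow_eq_one_add_smul (hdet ▸ isUnit_one) (m + 1)
  set p : Fin N → ℤ := fun i => round (((m + 1 : ℕ) : ℝ) * x i)
  have hfix := one_sub_map_intCast_mulVec_div hC p
  have hpow : (B ^ k).map (fun k => (k : ℝ)) = B.map (fun k => (k : ℝ)) ^ k :=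
    Matrix.map_pow B (Int.castRingHom ℝ) k
  rw [hpow] at hfix
  refine ⟨fun i => (p i : ℝ) / (m + 1 : ℕ), ⟨-(C *ᵥ p), k, Int.natCast_ne_zero.2 hk.ne', ?_⟩, ?_⟩
  · change _ = (1 - B.map (fun k => (k : ℝ)) ^ k)⁻¹ *ᵥ _
    rw [← hfix, mulVec_mulVec,
      nonsing_inv_mul _ ((isUnit_one_sub_pow_map_intCast hhyp hk).map detMonoidHom),
      one_mulVec]
  · calc _ ≤ 1 / ((m + 1 : ℕ) : ℝ) := dist_div_round_mul_le x (by positivity)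
      _ < ε := by exact_mod_cast hm

/-- Let `B ∈ SL(N,ℤ)` be a hyperbolic toral automorphism. If the orbit of `x*` under the
affine action `((b,n), x) ↦ Bⁿx + b` of `ℤ^N ⋊_B ℤ` is dense in `ℝ^N`, then `x*` lies in
the closure of the set of fixed points `(I - Bⁿ)⁻¹ b`, `b ∈ ℤ^N`, `n ≠ 0`, of nontrivial
group elements. -/
theorem fixed_points_accumulate {N : ℕ} (B : Matrix (Fin N) (Fin N) ℤ)
    (hdet : B.det = 1)
    (hhyp : ∀ μ ∈ spectrum ℂ (B.map (fun k => (k : ℂ))), ‖μ‖ ≠ 1)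
    (x : Fin N → ℝ)
    (hdense : Dense {y : Fin N → ℝ | ∃ (b : Fin N → ℤ) (n : ℤ),
      y = (mzpow (B.map (fun k => (k : ℝ))) n).mulVec x + fun i => (b i : ℝ)}) :
    x ∈ closure {z : Fin N → ℝ | ∃ (b : Fin N → ℤ) (n : ℤ), n ≠ 0 ∧
      z = ((1 - mzpow (B.map (fun k => (k : ℝ))) n)⁻¹).mulVec (fun i => (b i : ℝ))} :=
  fixed_points_accumulate_general B hdet hhyp x
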